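/- Let G be a nonzero additive subgroup of ℂ, α, β ∈ ℂ, and suppose V(α,β,G) is reducible (so α ∈ G, β ∈ {0,1}). Then V(α,β,G) has a unique nontrivial irreducible subquotient V'(α,β,G), and its support is either α + G or G \ {0}. -/

import Mathlib

open Finsupp

/-- The action of `d_x` on the intermediate series module `V(α,β,G)` with basis `{v_y : y ∈ G}`:
`d_x v_y = (α + y + xβ) v_{x+y}` (the central element `C` acts by `0`). -/
noncomputable def dActL (G : AddSubgroup ℂ) (α β : ℂ) (x : ↥G) : (↥G →₀ ℂ) →ₗ[ℂ] (↥G →₀ ℂ) :=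
  Finsupp.lsum ℂ fun y : ↥G =>
    LinearMap.toSpanSingleton ℂ (↥G →₀ ℂ) ((α + (y : ℂ) + (x : ℂ) * β) • Finsupp.single (x + y) (1 : ℂ))

/-- Invariance of a subspace under the `Vir[G]`-action on `V(α,β,G)`. -/
def VirInvariant (G : AddSubgroup ℂ) (α β : ℂ) (S : Submodule ℂ (↥G →₀ ℂ)) : Prop :=
  ∀ x : ↥G, ∀ v ∈ S, dActL G α β x v ∈ S

/-- Helper instance (the general Mathlib instance, respelled to aid instance search). -/
noncomputable instance quotOfSubmodule (G : AddSubgroup ℂ) (S : Submodule ℂ (↥G →₀ ℂ)) :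
    HasQuotient ↥S (Submodule ℂ ↥S) := @Submodule.hasQuotient ℂ ↥S _ _ _

/-- The endomorphism induced by `d_x` on the subquotient `S/S'` of `V(α,β,G)`. -/
noncomputable def qEnd (G : AddSubgroup ℂ) (α β : ℂ) (S S' : Submodule ℂ (↥G →₀ ℂ))
    (hS : VirInvariant G α β S) (hS' : VirInvariant G α β S') (x : ↥G) :
    (↥S ⧸ S'.comap S.subtype) →ₗ[ℂ] (↥S ⧸ S'.comap S.subtype) :=
  Submodule.mapQ _ _
    ((dActL G α β x).restrict (hS x)) (by
      intro v hv
      simp only [Submodule.mem_comap, LinearMap.restrict_apply, Submodule.coe_subtype] at hv ⊢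
      exact hS' x _ hv)

/-!
Put `a := -α ∈ G`. The operator `d_0` is diagonal with pairwise distinct eigenvalues `α + y`, so
every `Vir[G]`-stable subspace is spanned by the basis vectors it contains, i.e. it is
`supported ℂ ℂ s` for some `s ⊆ G`. The coefficient of `d_x v_y` vanishes only for `y = a` when
`β = 0`, and only for `x + y = a` when `β = 1`; hence `s` is `∅`, `{a}` or `G`, resp. `∅`, `G \ {a}`
or `G`. The stable subspaces thus form a chain `0 < M < V` in which exactly one of `M`, `V / M` is
acted on trivially, and the other is the only nontrivial irreducible subquotient. Its `d_0`-weights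
are the `α + y = y - a` with `y ≠ a`, i.e. `G \ {0}`.
-/

section Supported

variable {ι R : Type*} [Semiring R] [Nontrivial R] {s : Set ι} {y : ι}

theorem Finsupp.single_one_mem_supported_iff : single y (1 : R) ∈ supported R R s ↔ y ∈ s := by
  rw [supported_eq_span_single]
  exact single_mem_span_single R

theorem Finsupp.supported_ne_bot_of_mem (hy : y ∈ s) : supported R R s ≠ ⊥ := fun h => by
  simpa [h] using (single_one_mem_supported_iff (R := R)).2 hy

theorem Finsupp.supported_ne_top_of_notMem (hy : y ∉ s) : supported R R s ≠ ⊤ := fun h =>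
  hy (single_one_mem_supported_iff.1 (h ▸ Submodule.mem_top))

theorem Finsupp.supported_singleton_ne_bot (a : ι) : supported R R {a} ≠ ⊥ :=
  supported_ne_bot_of_mem (Set.mem_singleton a)

theorem Finsupp.supported_compl_singleton_ne_top (a : ι) : supported R R {a}ᶜ ≠ ⊤ :=
  supported_ne_top_of_notMem (Set.notMem_compl_iff.2 (Set.mem_singleton a))

theorem Finsupp.supported_singleton_ne_top [Nontrivial ι] (a : ι) : supported R R {a} ≠ ⊤ :=
  supported_ne_top_of_notMem (exists_ne a).choose_spec

theorem Finsupp.supported_compl_singleton_ne_bot [Nontrivial ι] (a : ι) : supported R R {a}ᶜ ≠ ⊥ :=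
  supported_ne_bot_of_mem (exists_ne a).choose_spec

end Supported

def IsNontrivialSubquotient (G : AddSubgroup ℂ) (α β : ℂ) (S S' : Submodule ℂ (↥G →₀ ℂ)) :
    Prop :=
  ∃ x : ↥G, ∃ v ∈ S, dActL G α β x v ∉ S'

def IsIrreducibleSubquotient (G : AddSubgroup ℂ) (α β : ℂ) (S S' : Submodule ℂ (↥G →₀ ℂ)) :
    Prop :=
  ∀ T : Submodule ℂ (↥G →₀ ℂ), VirInvariant G α β T → S' ≤ T → T ≤ S → T = S' ∨ T = S

def subquotientWeights (G : AddSubgroup ℂ) (α β : ℂ) (S S' : Submodule ℂ (↥G →₀ ℂ)) : Set ℂ :=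
  {μ | ∃ v ∈ S, v ∉ S' ∧ dActL G α β 0 v - μ • v ∈ S'}

section Action

variable {G : AddSubgroup ℂ} {α β : ℂ}

theorem dActL_single (x y : ↥G) (c : ℂ) :
    dActL G α β x (single y c) = single (x + y) ((α + y + x * β) * c) := by
  rw [dActL, lsum_single, LinearMap.toSpanSingleton_apply, smul_single_one,
    smul_single, smul_eq_mul, mul_comm]

theorem dActL_apply (x : ↥G) (f : ↥G →₀ ℂ) (z : ↥G) :
    dActL G α β x f z = (α + ↑(z - x) + x * β) * f (z - x) := by
  induction f using Finsupp.induction_linear with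
  | zero => simp
  | add f g hf hg => simp only [map_add, Finsupp.add_apply, hf, hg, mul_add]
  | single y c =>
    rw [dActL_single]
    by_cases h : x + y = z
    · subst h
      simp
    · have h' : y ≠ z - x := fun h'' => h (by rw [h'']; abel)
      simp [h, h']

theorem dActL_zero_apply (f : ↥G →₀ ℂ) (z : ↥G) : dActL G α β 0 f z = (α + z) * f z := by
  simp [dActL_apply]

theorem dActL_zero_sub_smul_apply (f : ↥G →₀ ℂ) (y z : ↥G) :
    (dActL G α β 0 f - (α + y) • f) z = (z - y) * f z := by
  rw [Finsupp.sub_apply, Finsupp.smul_apply, dActL_zero_apply, smul_eq_mul]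
  ring

theorem single_mem_of_apply_ne_zero {T : Submodule ℂ (↥G →₀ ℂ)}
    (hT : ∀ v ∈ T, dActL G α β 0 v ∈ T) {v : ↥G →₀ ℂ} (hv : v ∈ T) {y : ↥G} (hy : v y ≠ 0) :
    single y 1 ∈ T := by
  obtain ⟨n, hn⟩ : ∃ n, v.support.card = n := ⟨_, rfl⟩
  induction n using Nat.strong_induction_on generalizing v with
  | _ n ih =>
    by_cases hsupp : v.support ⊆ {y}
    · rw [Finsupp.eq_single_iff.2 ⟨hsupp, rfl⟩, ← smul_single_one] at hv
      exact (T.smul_mem_iff hy).1 hv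
    -- `d_0 - (α + z)` kills the `z`-coefficient and rescales the `y`-coefficient by `y - z ≠ 0`
    obtain ⟨z, hz, hzy⟩ := Finset.not_subset.1 hsupp
    set w := dActL G α β 0 v - (α + z) • v
    have hwT : w ∈ T := T.sub_mem (hT v hv) (T.smul_mem _ hv)
    have hzy' : (y : ℂ) - z ≠ 0 :=
      sub_ne_zero.2 fun h => hzy (Finset.mem_singleton.2 (Subtype.coe_injective h).symm)
    have hwy : w y ≠ 0 := by
      rw [dActL_zero_sub_smul_apply]
      exact mul_ne_zero hzy' hy
    have hwsupp : w.support ⊆ v.support.erase z := fun u hu => by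
      rw [Finsupp.mem_support_iff, dActL_zero_sub_smul_apply] at hu
      obtain ⟨huz, hvu⟩ := mul_ne_zero_iff.1 hu
      exact Finset.mem_erase.2 ⟨fun h => huz (by rw [h, sub_self]), Finsupp.mem_support_iff.2 hvu⟩
    exact ih _ (hn ▸ (Finset.card_le_card hwsupp).trans_lt (Finset.card_erase_lt_of_mem hz))
      hwT hwy rfl

theorem VirInvariant.exists_eq_supported {T : Submodule ℂ (↥G →₀ ℂ)} (hT : VirInvariant G α β T) :
    ∃ s : Set ↥G, T = supported ℂ ℂ s ∧
      ∀ y ∈ s, ∀ z : ↥G, α + y + ↑(z - y) * β ≠ 0 → z ∈ s := by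
  refine ⟨{y | single y 1 ∈ T}, le_antisymm (fun v hv => ?_) ?_, fun y hy z hz => ?_⟩
  · exact (mem_supported' ℂ v).2 fun y hy =>
      not_not.1 fun h => hy (single_mem_of_apply_ne_zero (hT 0) hv h)
  · rw [supported_eq_span_single, Submodule.span_le]
    rintro _ ⟨y, hy, rfl⟩
    exact hy
  · have h := hT (z - y) _ hy
    rwa [dActL_single, sub_add_cancel, mul_one, ← smul_single_one, T.smul_mem_iff hz] at h

theorem virInvariant_top : VirInvariant G α β ⊤ := fun _ _ _ => Submodule.mem_top

theorem virInvariant_bot : VirInvariant G α β ⊥ := fun x v hv => by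
  rw [Submodule.mem_bot] at hv ⊢
  rw [hv, map_zero]

theorem subquotientWeights_supported (s s' : Set ↥G) :
    subquotientWeights G α β (supported ℂ ℂ s) (supported ℂ ℂ s') =
      (fun y : ↥G => α + y) '' (s \ s') := by
  ext μ
  constructor
  · rintro ⟨v, hv, hv', hμ⟩
    obtain ⟨z, hz', hvz⟩ : ∃ z ∉ s', v z ≠ 0 := by
      simpa only [mem_supported', not_forall, exists_prop] using hv'
    have hz : z ∈ s := not_not.1 fun h => hvz ((mem_supported' ℂ v).1 hv z h)
    have hμz : (α + z - μ) * v z = 0 := by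
      rw [← (mem_supported' ℂ _).1 hμ z hz', Finsupp.sub_apply, Finsupp.smul_apply,
        dActL_zero_apply, smul_eq_mul, sub_mul]
    exact ⟨z, ⟨hz, hz'⟩, sub_eq_zero.1 ((mul_eq_zero.1 hμz).resolve_right hvz)⟩
  · rintro ⟨y, ⟨hy, hy'⟩, rfl⟩
    refine ⟨single y 1, single_mem_supported ℂ 1 hy, single_one_mem_supported_iff.not.2 hy', ?_⟩
    simp [dActL_single]

theorem add_coe_eq_zero_iff {a y : ↥G} (ha : α + a = 0) : α + y = 0 ↔ y = a := by
  rw [← ha, add_right_inj]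
  exact Subtype.coe_injective.eq_iff

theorem image_add_compl_singleton {a : ↥G} (ha : α + a = 0) :
    (fun y : ↥G => α + y) '' {a}ᶜ = {μ : ℂ | ∃ y : ↥G, (y : ℂ) ≠ 0 ∧ μ = y} := by
  ext μ
  constructor
  · rintro ⟨y, hy, rfl⟩
    refine ⟨y - a, ?_, by push_cast; linear_combination ha⟩
    simpa [sub_eq_zero] using hy
  · rintro ⟨y, hy, rfl⟩
    refine ⟨y + a, ?_, by push_cast; linear_combination ha⟩
    simpa using hy

theorem IsNontrivialSubquotient.of_subquotientWeights_eq [Nontrivial ↥G]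
    {S S' : Submodule ℂ (↥G →₀ ℂ)}
    (hw : subquotientWeights G α β S S' = {μ : ℂ | ∃ y : ↥G, (y : ℂ) ≠ 0 ∧ μ = y}) :
    IsNontrivialSubquotient G α β S S' := by
  obtain ⟨g, hg⟩ := exists_ne (0 : ↥G)
  have hg0 : (g : ℂ) ≠ 0 := by simpa using hg
  obtain ⟨v, hv, hv', hgv⟩ : (g : ℂ) ∈ subquotientWeights G α β S S' := hw ▸ ⟨g, hg0, rfl⟩
  refine ⟨0, v, hv, fun h => hv' ((S'.smul_mem_iff hg0).1 ?_)⟩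
  simpa using S'.sub_mem h hgv

theorem exists_linearEquiv_comp_qEnd_of_eq {S S' T T' : Submodule ℂ (↥G →₀ ℂ)}
    (hS : VirInvariant G α β S) (hS' : VirInvariant G α β S') (hT : VirInvariant G α β T)
    (hT' : VirInvariant G α β T') (h : T = S ∧ T' = S') :
    ∃ e : (↥S ⧸ S'.comap S.subtype) ≃ₗ[ℂ] (↥T ⧸ T'.comap T.subtype), ∀ x : ↥G,
      e.toLinearMap ∘ₗ qEnd G α β S S' hS hS' x = qEnd G α β T T' hT hT' x ∘ₗ e.toLinearMap := by
  obtain ⟨rfl, rfl⟩ := h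
  exact ⟨LinearEquiv.refl ℂ _, fun _ => rfl⟩

section Chain

variable {M : Submodule ℂ (↥G →₀ ℂ)}

theorem isIrreducibleSubquotient_top
    (hcls : ∀ T, VirInvariant G α β T → T = ⊥ ∨ T = M ∨ T = ⊤) (hM : M ≠ ⊥) :
    IsIrreducibleSubquotient G α β ⊤ M := by
  intro T hT hMT _
  rcases hcls T hT with rfl | rfl | rfl
  · exact absurd (le_bot_iff.1 hMT) hM
  · exact Or.inl rfl
  · exact Or.inr rfl

theorem isIrreducibleSubquotient_bot
    (hcls : ∀ T, VirInvariant G α β T → T = ⊥ ∨ T = M ∨ T = ⊤) (hM : M ≠ ⊤) :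
    IsIrreducibleSubquotient G α β M ⊥ := by
  intro T hT _ hTM
  rcases hcls T hT with rfl | rfl | rfl
  · exact Or.inl rfl
  · exact Or.inr rfl
  · exact absurd (top_le_iff.1 hTM) hM

theorem IsIrreducibleSubquotient.eq_of_classification
    (hcls : ∀ T, VirInvariant G α β T → T = ⊥ ∨ T = M ∨ T = ⊤) (hMinv : VirInvariant G α β M)
    (hM_bot : M ≠ ⊥) (hM_top : M ≠ ⊤) {T T' : Submodule ℂ (↥G →₀ ℂ)}
    (hirr : IsIrreducibleSubquotient G α β T T') (hT : VirInvariant G α β T)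
    (hT' : VirInvariant G α β T') (hle : T' ≤ T) (hnt : IsNontrivialSubquotient G α β T T') :
    T = M ∧ T' = ⊥ ∨ T = ⊤ ∧ T' = M := by
  have hne : T' ≠ T := by
    rintro rfl
    obtain ⟨x, v, hv, h⟩ := hnt
    exact h (hT x v hv)
  have hlong : ¬ (T = ⊤ ∧ T' = ⊥) := by
    rintro ⟨rfl, rfl⟩
    rcases hirr M hMinv bot_le le_top with h | h
    exacts [hM_bot h, hM_top h]
  rcases hcls T hT with rfl | rfl | rfl <;> rcases hcls T' hT' with rfl | rfl | rfl <;>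
    first
    | exact Or.inl ⟨rfl, rfl⟩
    | exact Or.inr ⟨rfl, rfl⟩
    | exact absurd ⟨rfl, rfl⟩ hlong
    | exact absurd (le_antisymm hle (by simp)) hne

end Chain

section BetaZero

variable {a : ↥G}

theorem VirInvariant.eq_bot_or_eq_supported_singleton_or_eq_top (ha : α + a = 0)
    {T : Submodule ℂ (↥G →₀ ℂ)} (hT : VirInvariant G α 0 T) :
    T = ⊥ ∨ T = supported ℂ ℂ {a} ∨ T = ⊤ := by
  obtain ⟨s, rfl, hs⟩ := hT.exists_eq_supported
  by_cases h : ∃ y ∈ s, y ≠ a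
  · obtain ⟨y, hy, hya⟩ := h
    have hs_univ : s = Set.univ := Set.eq_univ_of_forall fun z =>
      hs y hy z (by simpa only [mul_zero, add_zero, ne_eq, add_coe_eq_zero_iff ha] using hya)
    exact Or.inr (Or.inr (by rw [hs_univ, supported_univ]))
  · push Not at h
    rcases Set.subset_singleton_iff_eq.1 h with rfl | rfl
    · exact Or.inl supported_empty
    · exact Or.inr (Or.inl rfl)

theorem dActL_eq_zero_of_mem_supported_singleton (ha : α + a = 0) (x : ↥G)
    {v : ↥G →₀ ℂ} (hv : v ∈ supported ℂ ℂ {a}) : dActL G α 0 x v = 0 := by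
  ext z
  rw [dActL_apply, Finsupp.zero_apply, mul_zero, add_zero]
  by_cases hz : z - x = a
  · rw [hz, ha, zero_mul]
  · rw [(mem_supported' ℂ v).1 hv _ hz, mul_zero]

theorem virInvariant_supported_singleton (ha : α + a = 0) :
    VirInvariant G α 0 (supported ℂ ℂ {a}) := fun x v hv => by
  rw [dActL_eq_zero_of_mem_supported_singleton ha x hv]
  exact Submodule.zero_mem _

theorem subquotientWeights_top_supported_singleton (ha : α + a = 0) :
    subquotientWeights G α β ⊤ (supported ℂ ℂ {a}) = {μ : ℂ | ∃ y : ↥G, (y : ℂ) ≠ 0 ∧ μ = y} := by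
  rw [← supported_univ, subquotientWeights_supported, ← Set.compl_eq_univ_sdiff,
    image_add_compl_singleton ha]

theorem isIrreducibleSubquotient_top_supported_singleton (ha : α + a = 0) :
    IsIrreducibleSubquotient G α 0 ⊤ (supported ℂ ℂ {a}) :=
  isIrreducibleSubquotient_top (fun _ hT => hT.eq_bot_or_eq_supported_singleton_or_eq_top ha)
    (supported_singleton_ne_bot a)

theorem IsIrreducibleSubquotient.eq_top_and_eq_supported_singleton [Nontrivial ↥G]
    (ha : α + a = 0) {T T' : Submodule ℂ (↥G →₀ ℂ)} (hirr : IsIrreducibleSubquotient G α 0 T T')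
    (hT : VirInvariant G α 0 T) (hT' : VirInvariant G α 0 T') (hle : T' ≤ T)
    (hnt : IsNontrivialSubquotient G α 0 T T') : T = ⊤ ∧ T' = supported ℂ ℂ {a} := by
  refine (hirr.eq_of_classification (fun _ hR => hR.eq_bot_or_eq_supported_singleton_or_eq_top ha)
    (virInvariant_supported_singleton ha) (supported_singleton_ne_bot a)
    (supported_singleton_ne_top a) hT hT' hle hnt).resolve_left ?_
  rintro ⟨rfl, rfl⟩
  obtain ⟨x, _, hv, h⟩ := hnt
  exact h (by rw [dActL_eq_zero_of_mem_supported_singleton ha x hv]; exact Submodule.zero_mem _)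

end BetaZero

section BetaOne

variable {a : ↥G}

theorem VirInvariant.eq_bot_or_eq_supported_compl_or_eq_top (ha : α + a = 0)
    {T : Submodule ℂ (↥G →₀ ℂ)} (hT : VirInvariant G α 1 T) :
    T = ⊥ ∨ T = supported ℂ ℂ {a}ᶜ ∨ T = ⊤ := by
  obtain ⟨s, rfl, hs⟩ := hT.exists_eq_supported
  rcases s.eq_empty_or_nonempty with rfl | ⟨y, hy⟩
  · exact Or.inl supported_empty
  have hcompl : {a}ᶜ ⊆ s := fun z hz => hs y hy z <| by
    rwa [mul_one, AddSubgroup.coe_sub, add_add_sub_cancel, ne_eq, add_coe_eq_zero_iff ha]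
  by_cases has : a ∈ s
  · have hs_univ : s = Set.univ := Set.eq_univ_of_forall fun z =>
      if hz : z = a then hz ▸ has else hcompl hz
    exact Or.inr (Or.inr (by rw [hs_univ, supported_univ]))
  · have hs : s = {a}ᶜ := (Set.subset_compl_singleton_iff.2 has).antisymm hcompl
    exact Or.inr (Or.inl (by rw [hs]))

theorem dActL_mem_supported_compl (ha : α + a = 0) (x : ↥G) (v : ↥G →₀ ℂ) :
    dActL G α 1 x v ∈ supported ℂ ℂ {a}ᶜ := by
  refine (mem_supported' ℂ _).2 fun z hz => ?_
  rw [Set.notMem_compl_iff, Set.mem_singleton_iff] at hz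
  rw [dActL_apply, hz, mul_one, AddSubgroup.coe_sub, add_sub_assoc', sub_add_cancel, ha, zero_mul]

theorem virInvariant_supported_compl_singleton (ha : α + a = 0) :
    VirInvariant G α 1 (supported ℂ ℂ {a}ᶜ) := fun x v _ => dActL_mem_supported_compl ha x v

theorem subquotientWeights_supported_compl_singleton_bot (ha : α + a = 0) :
    subquotientWeights G α β (supported ℂ ℂ {a}ᶜ) ⊥ = {μ : ℂ | ∃ y : ↥G, (y : ℂ) ≠ 0 ∧ μ = y} := by
  rw [← supported_empty, subquotientWeights_supported, Set.sdiff_empty,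
    image_add_compl_singleton ha]

theorem isIrreducibleSubquotient_supported_compl_singleton_bot (ha : α + a = 0) :
    IsIrreducibleSubquotient G α 1 (supported ℂ ℂ {a}ᶜ) ⊥ :=
  isIrreducibleSubquotient_bot (fun _ hT => hT.eq_bot_or_eq_supported_compl_or_eq_top ha)
    (supported_compl_singleton_ne_top a)

theorem IsIrreducibleSubquotient.eq_supported_compl_singleton_and_eq_bot [Nontrivial ↥G]
    (ha : α + a = 0) {T T' : Submodule ℂ (↥G →₀ ℂ)} (hirr : IsIrreducibleSubquotient G α 1 T T')
    (hT : VirInvariant G α 1 T) (hT' : VirInvariant G α 1 T') (hle : T' ≤ T)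
    (hnt : IsNontrivialSubquotient G α 1 T T') : T = supported ℂ ℂ {a}ᶜ ∧ T' = ⊥ := by
  refine (hirr.eq_of_classification (fun _ hR => hR.eq_bot_or_eq_supported_compl_or_eq_top ha)
    (virInvariant_supported_compl_singleton ha) (supported_compl_singleton_ne_bot a)
    (supported_compl_singleton_ne_top a) hT hT' hle hnt).resolve_right ?_
  rintro ⟨rfl, rfl⟩
  obtain ⟨x, v, _, h⟩ := hnt
  exact h (dActL_mem_supported_compl ha x v)

end BetaOne

end Action

/-- if `V(α,β,G)` is reducible (`α ∈ G`, `β ∈ {0,1}`), it has a unique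
nontrivial irreducible subquotient `V'(α,β,G)`, whose support is `α + G` or `G \ {0}`. -/
theorem unique_nontrivial_irreducible_subquotient (G : AddSubgroup ℂ) (hG : G ≠ ⊥)
    (α β : ℂ) (hα : α ∈ G) (hβ : β = 0 ∨ β = 1) :
    ∃ (S S' : Submodule ℂ (↥G →₀ ℂ)) (hS : VirInvariant G α β S)
      (hS' : VirInvariant G α β S') (_ : S' ≤ S),
      -- nontriviality: Vir[G] does not act by zero on S/S'
      (∃ x : ↥G, ∃ v ∈ S, dActL G α β x v ∉ S') ∧
      -- irreducibility of the subquotient S/S'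
      (∀ T : Submodule ℂ (↥G →₀ ℂ), VirInvariant G α β T → S' ≤ T → T ≤ S →
        T = S' ∨ T = S) ∧
      -- the support of S/S' is α + G or G \ {0}
      ({μ : ℂ | ∃ v ∈ S, v ∉ S' ∧ dActL G α β 0 v - μ • v ∈ S'} =
          {μ : ℂ | ∃ y : ↥G, μ = α + y} ∨
        {μ : ℂ | ∃ v ∈ S, v ∉ S' ∧ dActL G α β 0 v - μ • v ∈ S'} =
          {μ : ℂ | ∃ y : ↥G, (y : ℂ) ≠ 0 ∧ μ = (y : ℂ)}) ∧
      -- uniqueness: any other nontrivial irreducible subquotient is isomorphic to S/S'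
      (∀ (T T' : Submodule ℂ (↥G →₀ ℂ)) (hT : VirInvariant G α β T)
          (hT' : VirInvariant G α β T') (_ : T' ≤ T),
        (∃ x : ↥G, ∃ v ∈ T, dActL G α β x v ∉ T') →
        (∀ R : Submodule ℂ (↥G →₀ ℂ), VirInvariant G α β R → T' ≤ R → R ≤ T →
          R = T' ∨ R = T) →
        ∃ e : (↥S ⧸ S'.comap S.subtype) ≃ₗ[ℂ] (↥T ⧸ T'.comap T.subtype),
          ∀ x : ↥G,
            e.toLinearMap ∘ₗ qEnd G α β S S' hS hS' x =
              qEnd G α β T T' hT hT' x ∘ₗ e.toLinearMap) := by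
  have : Nontrivial ↥G := (AddSubgroup.nontrivial_iff_ne_bot G).2 hG
  obtain ⟨a, ha⟩ : ∃ a : ↥G, α + a = 0 := ⟨-⟨α, hα⟩, by simp⟩
  rcases hβ with rfl | rfl
  · have hw := subquotientWeights_top_supported_singleton (β := 0) ha
    exact ⟨⊤, _, virInvariant_top, virInvariant_supported_singleton ha, le_top,
      IsNontrivialSubquotient.of_subquotientWeights_eq hw,
      isIrreducibleSubquotient_top_supported_singleton ha, .inr hw,
      fun T T' hT hT' hle hnt hirr => exists_linearEquiv_comp_qEnd_of_eq _ _ hT hT'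
        (IsIrreducibleSubquotient.eq_top_and_eq_supported_singleton ha hirr hT hT' hle hnt)⟩
  · have hw := subquotientWeights_supported_compl_singleton_bot (β := 1) ha
    exact ⟨_, ⊥, virInvariant_supported_compl_singleton ha, virInvariant_bot, bot_le,
      IsNontrivialSubquotient.of_subquotientWeights_eq hw,
      isIrreducibleSubquotient_supported_compl_singleton_bot ha, .inr hw,
      fun T T' hT hT' hle hnt hirr => exists_linearEquiv_comp_qEnd_of_eq _ _ hT hT'
        (IsIrreducibleSubquotient.eq_supported_compl_singleton_and_eq_bot ha hirr hT hT' hle hnt)⟩
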